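/- arXiv:1401.4563 — 2 statements merged into one kernel-verified Lean document; each statement's English description precedes it below -/
import Mathlib

section
/- Let Ω be a nonempty open subset of ℝ^d and equip L²_loc(Ω) with the topology of L²-convergence on compact subsets. (1) For every g ∈ L²_cpt(Ω), the map Λ_g(f) = ∫_Ω f·g dλ is a well-defined continuous linear functional on L²_loc(Ω). (2) Conversely, for every continuous linear functional Λ on L²_loc(Ω) there exists g ∈ L²_cpt(Ω), unique up to equality almost everywhere, such that Λ(f) = ∫_Ω f·g dλ for all f ∈ L²_loc(Ω). In particular, the pairing (f,g) ↦ ∫_Ω f·g dλ identifies L²_cpt(Ω) with the topological dual of L²_loc(Ω). -/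
open MeasureTheory

noncomputable section

/-- `L²_loc(Ω)` for an open set `Ω ⊆ ℝ^d`: the space of equivalence classes (modulo equality
almost everywhere) of functions `f : ℝ^d → ℂ` (with respect to Lebesgue measure restricted
to `Ω`) which are square integrable on every compact subset `K ⊆ Ω`. -/
def L2loc (d : ℕ) (Ω : Set (Fin d → ℝ)) :
    Submodule ℂ ((Fin d → ℝ) →ₘ[volume.restrict Ω] ℂ) where
  carrier := {f | ∀ K : Set (Fin d → ℝ), IsCompact K → K ⊆ Ω →
    eLpNorm f 2 ((volume.restrict Ω).restrict K) < ⊤}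
  add_mem' := by
    intro a b ha hb K hK hKΩ
    have h1 : ⇑(a + b) =ᵐ[((volume.restrict Ω)).restrict K] ⇑a + ⇑b :=
      (AEEqFun.coeFn_add a b).restrict
    rw [eLpNorm_congr_ae h1]
    exact (eLpNorm_add_le a.aestronglyMeasurable.restrict b.aestronglyMeasurable.restrict
      one_le_two).trans_lt (ENNReal.add_lt_top.mpr ⟨ha K hK hKΩ, hb K hK hKΩ⟩)
  zero_mem' := by
    intro K hK hKΩ
    have h1 : ⇑(0 : (Fin d → ℝ) →ₘ[volume.restrict Ω] ℂ)
        =ᵐ[((volume.restrict Ω)).restrict K] 0 := (AEEqFun.coeFn_zero).restrict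
    rw [eLpNorm_congr_ae h1, eLpNorm_zero]
    exact ENNReal.zero_lt_top
  smul_mem' := by
    intro c a ha K hK hKΩ
    have h1 : ⇑(c • a) =ᵐ[((volume.restrict Ω)).restrict K] c • ⇑a :=
      (AEEqFun.coeFn_smul c a).restrict
    rw [eLpNorm_congr_ae h1, eLpNorm_const_smul]
    exact ENNReal.mul_lt_top (by simp) (ha K hK hKΩ)

/-- The seminorm `p_K(f) = (∫_K |f|² dλ)^(1/2)` on `L²_loc(Ω)`, for a compact `K ⊆ Ω`. -/
def L2locSeminorm (d : ℕ) (Ω : Set (Fin d → ℝ)) (K : Set (Fin d → ℝ))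
    (hK : IsCompact K) (hKΩ : K ⊆ Ω) : Seminorm ℂ (L2loc d Ω) where
  toFun f := (eLpNorm (f : (Fin d → ℝ) →ₘ[volume.restrict Ω] ℂ) 2
      ((volume.restrict Ω).restrict K)).toReal
  map_zero' := by
    have h1 : ⇑(((0 : L2loc d Ω) : (Fin d → ℝ) →ₘ[volume.restrict Ω] ℂ))
        =ᵐ[((volume.restrict Ω)).restrict K] 0 := by
      simpa using (AEEqFun.coeFn_zero (β := ℂ)).restrict
    show (eLpNorm (((0 : L2loc d Ω) : (Fin d → ℝ) →ₘ[volume.restrict Ω] ℂ)) 2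
      ((volume.restrict Ω).restrict K)).toReal = 0
    rw [eLpNorm_congr_ae h1, eLpNorm_zero, ENNReal.toReal_zero]
  add_le' := by
    intro a b
    have h1 : ⇑(((a + b : L2loc d Ω) : (Fin d → ℝ) →ₘ[volume.restrict Ω] ℂ))
        =ᵐ[((volume.restrict Ω)).restrict K] ⇑(a : (Fin d → ℝ) →ₘ[volume.restrict Ω] ℂ)
          + ⇑(b : (Fin d → ℝ) →ₘ[volume.restrict Ω] ℂ) := by
      simpa using (AEEqFun.coeFn_add (a : (Fin d → ℝ) →ₘ[volume.restrict Ω] ℂ) b).restrict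
    have h2 := eLpNorm_add_le
      ((a : (Fin d → ℝ) →ₘ[volume.restrict Ω] ℂ).aestronglyMeasurable.restrict (s := K))
      ((b : (Fin d → ℝ) →ₘ[volume.restrict Ω] ℂ).aestronglyMeasurable.restrict (s := K))
      one_le_two
    have hfa := a.2 K hK hKΩ
    have hfb := b.2 K hK hKΩ
    show (eLpNorm (↑(a + b) : (Fin d → ℝ) →ₘ[volume.restrict Ω] ℂ) 2
      ((volume.restrict Ω).restrict K)).toReal ≤ _ + _
    calc (eLpNorm (↑(a + b) : (Fin d → ℝ) →ₘ[volume.restrict Ω] ℂ) 2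
          ((volume.restrict Ω).restrict K)).toReal
        = (eLpNorm (⇑(a : (Fin d → ℝ) →ₘ[volume.restrict Ω] ℂ)
            + ⇑(b : (Fin d → ℝ) →ₘ[volume.restrict Ω] ℂ)) 2
            ((volume.restrict Ω).restrict K)).toReal := by rw [eLpNorm_congr_ae h1]
      _ ≤ (eLpNorm (a : (Fin d → ℝ) →ₘ[volume.restrict Ω] ℂ) 2 ((volume.restrict Ω).restrict K)
            + eLpNorm (b : (Fin d → ℝ) →ₘ[volume.restrict Ω] ℂ) 2
              ((volume.restrict Ω).restrict K)).toReal := by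
          exact ENNReal.toReal_mono (ENNReal.add_lt_top.mpr ⟨hfa, hfb⟩).ne h2
      _ = _ := ENNReal.toReal_add hfa.ne hfb.ne
  neg' := by
    intro a
    have h1 : ⇑(((-a : L2loc d Ω) : (Fin d → ℝ) →ₘ[volume.restrict Ω] ℂ))
        =ᵐ[((volume.restrict Ω)).restrict K]
          -⇑(a : (Fin d → ℝ) →ₘ[volume.restrict Ω] ℂ) := by
      simpa using (AEEqFun.coeFn_neg (a : (Fin d → ℝ) →ₘ[volume.restrict Ω] ℂ)).restrict
    show (eLpNorm (((-a : L2loc d Ω) : (Fin d → ℝ) →ₘ[volume.restrict Ω] ℂ)) 2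
        ((volume.restrict Ω).restrict K)).toReal
      = (eLpNorm ((a : (Fin d → ℝ) →ₘ[volume.restrict Ω] ℂ)) 2
        ((volume.restrict Ω).restrict K)).toReal
    rw [eLpNorm_congr_ae h1, eLpNorm_neg]
  smul' := by
    intro c a
    have h1 : ⇑(((c • a : L2loc d Ω) : (Fin d → ℝ) →ₘ[volume.restrict Ω] ℂ))
        =ᵐ[((volume.restrict Ω)).restrict K]
          c • ⇑(a : (Fin d → ℝ) →ₘ[volume.restrict Ω] ℂ) := by
      simpa using (AEEqFun.coeFn_smul c (a : (Fin d → ℝ) →ₘ[volume.restrict Ω] ℂ)).restrict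
    show (eLpNorm (((c • a : L2loc d Ω) : (Fin d → ℝ) →ₘ[volume.restrict Ω] ℂ)) 2
        ((volume.restrict Ω).restrict K)).toReal
      = ‖c‖ * (eLpNorm ((a : (Fin d → ℝ) →ₘ[volume.restrict Ω] ℂ)) 2
        ((volume.restrict Ω).restrict K)).toReal
    rw [eLpNorm_congr_ae h1, eLpNorm_const_smul, ENNReal.toReal_mul]
    simp

/-- The family of seminorms `p_j` associated with a family of compact subsets of `Ω`. -/
def L2locSeminormFamily (d : ℕ) (Ω : Set (Fin d → ℝ)) (K : ℕ → Set (Fin d → ℝ))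
    (hK : ∀ j, IsCompact (K j)) (hKΩ : ∀ j, K j ⊆ Ω) :
    SeminormFamily ℂ (L2loc d Ω) ℕ :=
  fun j => L2locSeminorm d Ω (K j) (hK j) (hKΩ j)

/-- The locally convex topology on `L²_loc(Ω)` generated by the seminorms
`p_j(f) = (∫_{K_j} |f|² dλ)^(1/2)`: the topology of `L²`-convergence on compact subsets. -/
def L2locTopology (d : ℕ) (Ω : Set (Fin d → ℝ)) (K : ℕ → Set (Fin d → ℝ))
    (hK : ∀ j, IsCompact (K j)) (hKΩ : ∀ j, K j ⊆ Ω) :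
    TopologicalSpace (L2loc d Ω) :=
  (L2locSeminormFamily d Ω K hK hKΩ).moduleFilterBasis.topology

/-- An element of `L²_loc(Ω)` has compact essential support if it vanishes almost everywhere
outside some compact subset of `Ω`; these elements form the space `L²_cpt(Ω)`. -/
def HasCompactEssSupport (d : ℕ) (Ω : Set (Fin d → ℝ)) (f : L2loc d Ω) : Prop :=
  ∃ C : Set (Fin d → ℝ), IsCompact C ∧ C ⊆ Ω ∧
    ∀ᵐ x ∂(volume.restrict Ω), x ∉ C →
      (f : (Fin d → ℝ) →ₘ[volume.restrict Ω] ℂ) x = 0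

end

/-! Because `K j ⊆ interior (K (j + 1))` and `⋃ j, K j = Ω`, every compact subset of `Ω` lies in
some `K j`. A compactly supported `g` therefore pairs with `f` inside `L²(K j)`, and
Cauchy–Schwarz bounds the pairing by the seminorm `p_j`. Conversely, since the seminorms increase
with `j`, a continuous functional `Λ` is bounded by `C • p_j` for a single `j`; so it only sees
`f` on `K j` and induces a bounded functional on `L²(K j)`. Riesz gives `g₀ ∈ L²(K j)` with
`Λ f = ⟪g₀, f⟫ = ∫ conj g₀ · f`, and `conj g₀` extended by zero represents `Λ`. For uniqueness,
testing against `conj (g - g')` gives `∫ |g - g'|² = 0`. -/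

open Set Filter
open scoped NNReal InnerProductSpace

theorem IsCompact.exists_subset_of_exhaustion {X : Type*} [TopologicalSpace X]
    {K : ℕ → Set X} (hKint : ∀ j, K j ⊆ interior (K (j + 1))) {C : Set X} (hC : IsCompact C)
    (hCK : C ⊆ ⋃ j, K j) : ∃ j, C ⊆ K j := by
  have hmono : Monotone K := monotone_nat_of_le_succ fun j => (hKint j).trans interior_subset
  have hcover : C ⊆ ⋃ j, interior (K j) :=
    hCK.trans <| iUnion_subset fun j => (hKint j).trans <| subset_iUnion (interior ∘ K) (j + 1)
  obtain ⟨j, hj⟩ := hC.elim_directed_cover _ (fun _ => isOpen_interior) hcover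
    (Monotone.directed_le fun _ _ h => interior_mono (hmono h))
  exact ⟨j, hj.trans interior_subset⟩

section Pairing

variable {α : Type*} {m : MeasurableSpace α} {μ : Measure α} {S : Set α} {u v : α → ℂ}

theorem norm_integral_mul_le_eLpNorm_mul_eLpNorm (hu : MemLp u 2 μ) (hv : MemLp v 2 μ) :
    ‖∫ x, u x * v x ∂μ‖ ≤ (eLpNorm u 2 μ).toReal * (eLpNorm v 2 μ).toReal := by
  have hHolder : eLpNorm (u • v) 1 μ ≤ eLpNorm u 2 μ * eLpNorm v 2 μ :=
    eLpNorm_smul_le_mul_eLpNorm (p := 2) (q := 2) (r := 1) hv.1 hu.1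
  rw [← ENNReal.toReal_mul, ← toReal_enorm]
  refine ENNReal.toReal_mono (ENNReal.mul_ne_top hu.eLpNorm_ne_top hv.eLpNorm_ne_top) ?_
  calc ‖∫ x, u x * v x ∂μ‖ₑ ≤ ∫⁻ x, ‖u x * v x‖ₑ ∂μ := enorm_integral_le_lintegral_enorm _
    _ = eLpNorm (u • v) 1 μ := eLpNorm_one_eq_lintegral_enorm.symm
    _ ≤ _ := hHolder

theorem ae_eq_zero_of_integral_star_mul_self_eq_zero {w : α → ℂ}
    (hint : Integrable (fun x => star (w x) * w x) μ) (h : ∫ x, star (w x) * w x ∂μ = 0) :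
    w =ᵐ[μ] 0 := by
  have hsq : (fun x => star (w x) * w x) = fun x => ((‖w x‖ ^ 2 : ℝ) : ℂ) := by
    ext x
    rw [Complex.star_def, RCLike.conj_mul]
    norm_cast
  rw [hsq] at hint h
  rw [integral_complex_ofReal, Complex.ofReal_eq_zero] at h
  have hint' : Integrable (fun x => ‖w x‖ ^ 2) μ := by
    simpa only [Complex.norm_real, Real.norm_eq_abs, abs_pow, abs_norm] using hint.norm
  filter_upwards [(integral_eq_zero_iff_of_nonneg (fun x => by positivity) hint').mp h]
    with x hx
  simpa using hx

theorem mul_ae_eq_indicator_mul (hv : ∀ᵐ x ∂μ, x ∉ S → v x = 0) :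
    (fun x => u x * v x) =ᵐ[μ] S.indicator fun x => u x * v x := by
  filter_upwards [hv] with x hx
  by_cases hxS : x ∈ S
  · rw [indicator_of_mem hxS]
  · rw [indicator_of_notMem hxS, hx hxS, mul_zero]

theorem integral_mul_eq_setIntegral (hS : MeasurableSet S) (hv : ∀ᵐ x ∂μ, x ∉ S → v x = 0) :
    ∫ x, u x * v x ∂μ = ∫ x in S, u x * v x ∂μ := by
  rw [integral_congr_ae (mul_ae_eq_indicator_mul hv), integral_indicator hS]

theorem integrable_mul_of_memLp_restrict (hS : MeasurableSet S) (hu : MemLp u 2 (μ.restrict S))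
    (hv2 : MemLp v 2 (μ.restrict S)) (hv : ∀ᵐ x ∂μ, x ∉ S → v x = 0) :
    Integrable (fun x => u x * v x) μ := by
  rw [integrable_congr (mul_ae_eq_indicator_mul hv), integrable_indicator_iff hS]
  exact hu.integrable_mul hv2

end Pairing

noncomputable section L2loc

variable {d : ℕ} {Ω S : Set (Fin d → ℝ)}

theorem L2locSeminorm_apply (hS : IsCompact S) (hSΩ : S ⊆ Ω) (f : L2loc d Ω) :
    L2locSeminorm d Ω S hS hSΩ f = (eLpNorm f.1 2 ((volume.restrict Ω).restrict S)).toReal :=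
  rfl

theorem L2locSeminorm_mono {T : Set (Fin d → ℝ)} (hS : IsCompact S) (hSΩ : S ⊆ Ω)
    (hT : IsCompact T) (hTΩ : T ⊆ Ω) (hST : S ⊆ T) (f : L2loc d Ω) :
    L2locSeminorm d Ω S hS hSΩ f ≤ L2locSeminorm d Ω T hT hTΩ f :=
  ENNReal.toReal_mono (f.2 T hT hTΩ).ne <|
    eLpNorm_mono_measure _ (Measure.restrict_mono hST le_rfl)

theorem L2loc.ext_ae {f g : L2loc d Ω} (h : f.1 =ᵐ[volume.restrict Ω] g.1) : f = g :=
  Subtype.ext (AEEqFun.ext h)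

theorem L2loc.memLp (f : L2loc d Ω) (hS : IsCompact S) (hSΩ : S ⊆ Ω) :
    MemLp f.1 2 ((volume.restrict Ω).restrict S) :=
  ⟨f.1.aestronglyMeasurable.restrict, f.2 S hS hSΩ⟩

theorem L2loc.star_mem (f : L2loc d Ω) : star f.1 ∈ L2loc d Ω := fun T hT hTΩ => by
  rw [eLpNorm_congr_ae (AEEqFun.coeFn_star f.1).restrict, eLpNorm_star]
  exact f.2 T hT hTΩ

theorem HasCompactEssSupport.integrable_mul {g : L2loc d Ω} (hg : HasCompactEssSupport d Ω g)
    (f : L2loc d Ω) : Integrable (fun x => f.1 x * g.1 x) (volume.restrict Ω) := by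
  obtain ⟨C, hC, hCΩ, hgC⟩ := hg
  exact integrable_mul_of_memLp_restrict hC.measurableSet (L2loc.memLp f hC hCΩ)
    (L2loc.memLp g hC hCΩ) hgC

theorem HasCompactEssSupport.exists_ae_eq_zero_off {K : ℕ → Set (Fin d → ℝ)}
    (hKint : ∀ j, K j ⊆ interior (K (j + 1))) (hKunion : ⋃ j, K j = Ω) {g : L2loc d Ω}
    (hg : HasCompactEssSupport d Ω g) :
    ∃ j, ∀ᵐ x ∂(volume.restrict Ω), x ∉ K j → g.1 x = 0 := by
  obtain ⟨C, hC, hCΩ, hgC⟩ := hg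
  obtain ⟨j, hCK⟩ := hC.exists_subset_of_exhaustion hKint (hKunion ▸ hCΩ)
  exact ⟨j, hgC.mono fun x hx hxK => hx fun hxC => hxK (hCK hxC)⟩

theorem isLinearMap_integral_mul {g : L2loc d Ω}
    (hg : ∀ f : L2loc d Ω, Integrable (fun x => f.1 x * g.1 x) (volume.restrict Ω)) :
    IsLinearMap ℂ fun f : L2loc d Ω => ∫ x, f.1 x * g.1 x ∂(volume.restrict Ω) where
  map_add f₁ f₂ := by
    rw [← integral_add (hg f₁) (hg f₂)]
    refine integral_congr_ae ?_
    filter_upwards [AEEqFun.coeFn_add f₁.1 f₂.1] with x hx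
    rw [Submodule.coe_add, hx, Pi.add_apply, add_mul]
  map_smul c f := by
    rw [smul_eq_mul, ← integral_const_mul]
    refine integral_congr_ae ?_
    filter_upwards [AEEqFun.coeFn_smul c f.1] with x hx
    rw [Submodule.coe_smul, hx, Pi.smul_apply, smul_eq_mul, mul_assoc]

theorem continuous_integral_mul {K : ℕ → Set (Fin d → ℝ)} (hKc : ∀ j, IsCompact (K j))
    (hKΩ : ∀ j, K j ⊆ Ω) {j : ℕ} {g : L2loc d Ω}
    (hg : ∀ᵐ x ∂(volume.restrict Ω), x ∉ K j → g.1 x = 0) :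
    @Continuous _ _ (L2locTopology d Ω K hKc hKΩ) _
      fun f : L2loc d Ω => ∫ x, f.1 x * g.1 x ∂(volume.restrict Ω) := by
  let _ := L2locTopology d Ω K hKc hKΩ
  have hlin := isLinearMap_integral_mul fun f =>
    integrable_mul_of_memLp_restrict (hKc j).measurableSet (L2loc.memLp f (hKc j) (hKΩ j))
      (L2loc.memLp g (hKc j) (hKΩ j)) hg
  refine WithSeminorms.continuous_normedSpace_rng ℂ (p := L2locSeminormFamily d Ω K hKc hKΩ)
    ⟨rfl⟩ hlin.mk' ⟨{j}, (L2locSeminorm d Ω (K j) (hKc j) (hKΩ j) g).toNNReal, fun f => ?_⟩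
  rw [Seminorm.comp_apply, coe_normSeminorm, smul_apply, Finset.sup_singleton, NNReal.smul_def,
    Real.coe_toNNReal _ (apply_nonneg _ _)]
  change ‖∫ x, f.1 x * g.1 x ∂(volume.restrict Ω)‖ ≤
    L2locSeminorm d Ω (K j) (hKc j) (hKΩ j) g * L2locSeminorm d Ω (K j) (hKc j) (hKΩ j) f
  rw [integral_mul_eq_setIntegral (hKc j).measurableSet hg, mul_comm]
  exact norm_integral_mul_le_eLpNorm_mul_eLpNorm (L2loc.memLp f (hKc j) (hKΩ j))
    (L2loc.memLp g (hKc j) (hKΩ j))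

theorem exists_bound_of_continuous {K : ℕ → Set (Fin d → ℝ)} (hKc : ∀ j, IsCompact (K j))
    (hKΩ : ∀ j, K j ⊆ Ω) (hKint : ∀ j, K j ⊆ interior (K (j + 1)))
    {Λ : L2loc d Ω →ₗ[ℂ] ℂ} (hΛ : @Continuous _ _ (L2locTopology d Ω K hKc hKΩ) _ Λ) :
    ∃ j, ∃ C : ℝ≥0, ∀ f, ‖Λ f‖ ≤ C * L2locSeminorm d Ω (K j) (hKc j) (hKΩ j) f := by
  let _ := L2locTopology d Ω K hKc hKΩ
  obtain ⟨s, C, -, hC⟩ := Seminorm.bound_of_continuous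
    (p := L2locSeminormFamily d Ω K hKc hKΩ) ⟨rfl⟩ ((normSeminorm ℂ ℂ).comp Λ)
    (continuous_norm.comp hΛ)
  have hmono : Monotone K := monotone_nat_of_le_succ fun j => (hKint j).trans interior_subset
  refine ⟨s.sup id, C, fun f => (hC f).trans ?_⟩
  rw [smul_apply, NNReal.smul_def, smul_eq_mul]
  gcongr
  exact Seminorm.finset_sup_apply_le (apply_nonneg _ _) fun i hi =>
    L2locSeminorm_mono _ _ _ _ (hmono (Finset.le_sup (f := id) hi)) f

theorem map_eq_of_ae_eq_restrict {hS : IsCompact S} {hSΩ : S ⊆ Ω} {Λ : L2loc d Ω →ₗ[ℂ] ℂ}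
    {C : ℝ} (hΛ : ∀ f, ‖Λ f‖ ≤ C * L2locSeminorm d Ω S hS hSΩ f) {f₁ f₂ : L2loc d Ω}
    (h : f₁.1 =ᵐ[(volume.restrict Ω).restrict S] f₂.1) : Λ f₁ = Λ f₂ := by
  have hzero : L2locSeminorm d Ω S hS hSΩ (f₁ - f₂) = 0 := by
    rw [L2locSeminorm_apply, ENNReal.toReal_eq_zero_iff]
    refine Or.inl <| (eLpNorm_congr_ae ?_).trans eLpNorm_zero
    filter_upwards [(AEEqFun.coeFn_sub f₁.1 f₂.1).restrict, h] with x hx hx'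
    rw [Submodule.coe_sub, hx, Pi.sub_apply, hx', sub_self, Pi.zero_apply]
  have hbound := hΛ (f₁ - f₂)
  rw [hzero, mul_zero, norm_le_zero_iff] at hbound
  exact sub_eq_zero.1 ((Λ.map_sub f₁ f₂).symm.trans hbound)

namespace L2loc

theorem mk_indicator_mem (hS : MeasurableSet S) (h : Lp ℂ 2 ((volume.restrict Ω).restrict S)) :
    AEEqFun.mk (S.indicator h)
      ((aestronglyMeasurable_indicator_iff hS).2 (Lp.aestronglyMeasurable h)) ∈ L2loc d Ω :=
  fun T _ _ => by
    rw [eLpNorm_congr_ae (AEEqFun.coeFn_mk _ _).restrict]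
    calc eLpNorm (S.indicator h) 2 ((volume.restrict Ω).restrict T)
        ≤ eLpNorm (S.indicator h) 2 (volume.restrict Ω) :=
          eLpNorm_mono_measure _ Measure.restrict_le_self
      _ = eLpNorm h 2 ((volume.restrict Ω).restrict S) :=
          eLpNorm_indicator_eq_eLpNorm_restrict hS
      _ < ⊤ := Lp.eLpNorm_lt_top h

def indicator (hS : MeasurableSet S) (h : Lp ℂ 2 ((volume.restrict Ω).restrict S)) :
    L2loc d Ω :=
  ⟨_, mk_indicator_mem hS h⟩

theorem coeFn_indicator (hS : MeasurableSet S) (h : Lp ℂ 2 ((volume.restrict Ω).restrict S)) :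
    (indicator hS h).1 =ᵐ[volume.restrict Ω] S.indicator h :=
  AEEqFun.coeFn_mk _ _

def extendByZero (hS : MeasurableSet S) :
    Lp ℂ 2 ((volume.restrict Ω).restrict S) →ₗ[ℂ] L2loc d Ω where
  toFun := indicator hS
  map_add' h₁ h₂ := ext_ae <| by
    filter_upwards [coeFn_indicator hS (h₁ + h₂), coeFn_indicator hS h₁,
      coeFn_indicator hS h₂, AEEqFun.coeFn_add (indicator hS h₁).1 (indicator hS h₂).1,
      (ae_eq_restrict_iff_indicator_ae_eq hS).1 (Lp.coeFn_add h₁ h₂)] with x h h₁ h₂ hadd hsum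
    rw [Submodule.coe_add, hadd, Pi.add_apply, h, hsum, h₁, h₂, indicator_add', Pi.add_apply]
  map_smul' c h := ext_ae <| by
    filter_upwards [coeFn_indicator hS (c • h), coeFn_indicator hS h,
      AEEqFun.coeFn_smul c (indicator hS h).1,
      (ae_eq_restrict_iff_indicator_ae_eq hS).1 (Lp.coeFn_smul c h)] with x hch hh hsmul hcomm
    rw [RingHom.id_apply, Submodule.coe_smul, hsmul, Pi.smul_apply, hch, hcomm, hh]
    exact indicator_const_smul_apply S c _ x

theorem coeFn_extendByZero (hS : MeasurableSet S) (h : Lp ℂ 2 ((volume.restrict Ω).restrict S)) :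
    (extendByZero hS h).1 =ᵐ[volume.restrict Ω] S.indicator h :=
  coeFn_indicator hS h

theorem extendByZero_ae_eq_restrict (hS : MeasurableSet S)
    (h : Lp ℂ 2 ((volume.restrict Ω).restrict S)) :
    (extendByZero hS h).1 =ᵐ[(volume.restrict Ω).restrict S] h :=
  (coeFn_extendByZero hS h).restrict.trans (indicator_ae_eq_restrict hS)

theorem extendByZero_ae_eq_zero_off (hS : MeasurableSet S)
    (h : Lp ℂ 2 ((volume.restrict Ω).restrict S)) :
    ∀ᵐ x ∂(volume.restrict Ω), x ∉ S → (extendByZero hS h).1 x = 0 := by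
  filter_upwards [coeFn_extendByZero hS h] with x hx hxS
  rw [hx, indicator_of_notMem hxS]

theorem L2locSeminorm_extendByZero (hS : IsCompact S) (hSΩ : S ⊆ Ω)
    (h : Lp ℂ 2 ((volume.restrict Ω).restrict S)) :
    L2locSeminorm d Ω S hS hSΩ (extendByZero hS.measurableSet h) = ‖h‖ := by
  rw [L2locSeminorm_apply, Lp.norm_def,
    eLpNorm_congr_ae (extendByZero_ae_eq_restrict hS.measurableSet h)]

theorem integral_mul_extendByZero (hS : IsCompact S) (hSΩ : S ⊆ Ω) (f : L2loc d Ω)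
    (h : Lp ℂ 2 ((volume.restrict Ω).restrict S)) :
    ∫ x, f.1 x * (extendByZero hS.measurableSet h).1 x ∂(volume.restrict Ω) =
      ⟪star h, (memLp f hS hSΩ).toLp f.1⟫_ℂ := by
  rw [integral_mul_eq_setIntegral hS.measurableSet (extendByZero_ae_eq_zero_off _ h),
    L2.inner_def]
  refine integral_congr_ae ?_
  filter_upwards [extendByZero_ae_eq_restrict hS.measurableSet h, Lp.coeFn_star h,
    (memLp f hS hSΩ).coeFn_toLp] with x hE hstar hf
  rw [hE, RCLike.inner_apply, starRingEnd_apply, hstar, Pi.star_apply, star_star, hf, mul_comm]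

end L2loc

theorem exists_integral_mul_eq_of_bound (hS : IsCompact S)
    (hSΩ : S ⊆ Ω) {Λ : L2loc d Ω →ₗ[ℂ] ℂ} {C : ℝ≥0}
    (hΛ : ∀ f, ‖Λ f‖ ≤ C * L2locSeminorm d Ω S hS hSΩ f) :
    ∃ g : L2loc d Ω, (∀ᵐ x ∂(volume.restrict Ω), x ∉ S → g.1 x = 0) ∧
      ∀ f, Λ f = ∫ x, f.1 x * g.1 x ∂(volume.restrict Ω) := by
  set E := L2loc.extendByZero (Ω := Ω) hS.measurableSet
  let φ : Lp ℂ 2 ((volume.restrict Ω).restrict S) →L[ℂ] ℂ :=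
    (Λ ∘ₗ E).mkContinuous C fun h =>
      (hΛ (E h)).trans_eq (congrArg _ (L2loc.L2locSeminorm_extendByZero hS hSΩ h))
  set g₀ := (InnerProductSpace.toDual ℂ _).symm φ
  refine ⟨E (star g₀), L2loc.extendByZero_ae_eq_zero_off _ _, fun f => ?_⟩
  rw [L2loc.integral_mul_extendByZero hS hSΩ, star_star, InnerProductSpace.toDual_symm_apply]
  exact map_eq_of_ae_eq_restrict hΛ ((L2loc.extendByZero_ae_eq_restrict _ _).trans
    (L2loc.memLp f hS hSΩ).coeFn_toLp).symm

theorem eq_of_integral_mul_eq {g g' : L2loc d Ω}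
    (hg : HasCompactEssSupport d Ω g) (hg' : HasCompactEssSupport d Ω g')
    (h : ∀ f : L2loc d Ω, ∫ x, f.1 x * g.1 x ∂(volume.restrict Ω) =
      ∫ x, f.1 x * g'.1 x ∂(volume.restrict Ω)) : g = g' := by
  set w := g - g'
  let t : L2loc d Ω := ⟨star w.1, L2loc.star_mem w⟩
  have hprod : (fun x => t.1 x * g.1 x) - (fun x => t.1 x * g'.1 x) =ᵐ[volume.restrict Ω]
      fun x => star (w.1 x) * w.1 x := by
    filter_upwards [AEEqFun.coeFn_sub g.1 g'.1, AEEqFun.coeFn_star w.1] with x hw ht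
    rw [Pi.sub_apply, ← mul_sub, ht, Pi.star_apply, Submodule.coe_sub, hw, Pi.sub_apply]
  have hint := (hg.integrable_mul t).sub (hg'.integrable_mul t)
  refine sub_eq_zero.1 <| L2loc.ext_ae <|
    (ae_eq_zero_of_integral_star_mul_self_eq_zero (hint.congr hprod) ?_).trans
      AEEqFun.coeFn_zero.symm
  rw [← integral_congr_ae hprod, integral_sub' (hg.integrable_mul t) (hg'.integrable_mul t), h t,
    sub_self]

end L2loc

theorem L2cpt_dual_of_L2loc_general (d : ℕ) (Ω : Set (Fin d → ℝ))
    (K : ℕ → Set (Fin d → ℝ)) (hKc : ∀ j, IsCompact (K j)) (hKΩ : ∀ j, K j ⊆ Ω)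
    (hKint : ∀ j, K j ⊆ interior (K (j + 1))) (hKunion : (⋃ j, K j) = Ω) :
    (∀ g : L2loc d Ω, HasCompactEssSupport d Ω g →
      (∀ f : L2loc d Ω,
        Integrable
          (fun x => (f : (Fin d → ℝ) →ₘ[volume.restrict Ω] ℂ) x *
            (g : (Fin d → ℝ) →ₘ[volume.restrict Ω] ℂ) x) (volume.restrict Ω)) ∧
      IsLinearMap ℂ (fun f : L2loc d Ω =>
        ∫ x, (f : (Fin d → ℝ) →ₘ[volume.restrict Ω] ℂ) x *
          (g : (Fin d → ℝ) →ₘ[volume.restrict Ω] ℂ) x ∂(volume.restrict Ω)) ∧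
      @Continuous _ _ (L2locTopology d Ω K hKc hKΩ) _
        (fun f : L2loc d Ω =>
          ∫ x, (f : (Fin d → ℝ) →ₘ[volume.restrict Ω] ℂ) x *
            (g : (Fin d → ℝ) →ₘ[volume.restrict Ω] ℂ) x ∂(volume.restrict Ω))) ∧
    (∀ Λ : L2loc d Ω →ₗ[ℂ] ℂ, @Continuous _ _ (L2locTopology d Ω K hKc hKΩ) _ Λ →
      ∃! g : L2loc d Ω, HasCompactEssSupport d Ω g ∧
        ∀ f : L2loc d Ω,
          Λ f = ∫ x, (f : (Fin d → ℝ) →ₘ[volume.restrict Ω] ℂ) x *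
            (g : (Fin d → ℝ) →ₘ[volume.restrict Ω] ℂ) x ∂(volume.restrict Ω)) := by
  refine ⟨fun g hg => ⟨hg.integrable_mul, isLinearMap_integral_mul hg.integrable_mul, ?_⟩,
    fun Λ hΛ => ?_⟩
  · obtain ⟨j, hgj⟩ := hg.exists_ae_eq_zero_off hKint hKunion
    exact continuous_integral_mul hKc hKΩ hgj
  · obtain ⟨j, C, hC⟩ := exists_bound_of_continuous hKc hKΩ hKint hΛ
    obtain ⟨g, hgj, hrep⟩ := exists_integral_mul_eq_of_bound (hKc j) (hKΩ j) hC
    have hg : HasCompactEssSupport d Ω g := ⟨K j, hKc j, hKΩ j, hgj⟩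
    refine ⟨g, ⟨hg, hrep⟩, fun g' ⟨hg', hrep'⟩ => ?_⟩
    exact eq_of_integral_mul_eq hg' hg fun f => (hrep' f).symm.trans (hrep f)

/-- **`L²_cpt(Ω)` is the topological dual of `L²_loc(Ω)`** (the paper's Theorem 2.9, scalar
case): for a nonempty open `Ω ⊆ ℝ^d` with `L²_loc(Ω)` carrying the topology of
`L²`-convergence on compact subsets, (1) every compactly supported `g ∈ L²_cpt(Ω)` gives a
well-defined continuous linear functional `f ↦ ∫ f·g dλ` on `L²_loc(Ω)`, and (2) every
continuous linear functional on `L²_loc(Ω)` is represented in this way by a unique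
`g ∈ L²_cpt(Ω)`. -/
theorem L2cpt_dual_of_L2loc (d : ℕ) (Ω : Set (Fin d → ℝ)) (hΩ : IsOpen Ω) (hne : Ω.Nonempty)
    (K : ℕ → Set (Fin d → ℝ)) (hKc : ∀ j, IsCompact (K j)) (hKΩ : ∀ j, K j ⊆ Ω)
    (hKint : ∀ j, K j ⊆ interior (K (j + 1))) (hKunion : (⋃ j, K j) = Ω) :
    (∀ g : L2loc d Ω, HasCompactEssSupport d Ω g →
      (∀ f : L2loc d Ω,
        Integrable
          (fun x => (f : (Fin d → ℝ) →ₘ[volume.restrict Ω] ℂ) x *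
            (g : (Fin d → ℝ) →ₘ[volume.restrict Ω] ℂ) x) (volume.restrict Ω)) ∧
      IsLinearMap ℂ (fun f : L2loc d Ω =>
        ∫ x, (f : (Fin d → ℝ) →ₘ[volume.restrict Ω] ℂ) x *
          (g : (Fin d → ℝ) →ₘ[volume.restrict Ω] ℂ) x ∂(volume.restrict Ω)) ∧
      @Continuous _ _ (L2locTopology d Ω K hKc hKΩ) _
        (fun f : L2loc d Ω =>
          ∫ x, (f : (Fin d → ℝ) →ₘ[volume.restrict Ω] ℂ) x *
            (g : (Fin d → ℝ) →ₘ[volume.restrict Ω] ℂ) x ∂(volume.restrict Ω))) ∧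
    (∀ Λ : L2loc d Ω →ₗ[ℂ] ℂ, @Continuous _ _ (L2locTopology d Ω K hKc hKΩ) _ Λ →
      ∃! g : L2loc d Ω, HasCompactEssSupport d Ω g ∧
        ∀ f : L2loc d Ω,
          Λ f = ∫ x, (f : (Fin d → ℝ) →ₘ[volume.restrict Ω] ℂ) x *
            (g : (Fin d → ℝ) →ₘ[volume.restrict Ω] ℂ) x ∂(volume.restrict Ω)) :=
  L2cpt_dual_of_L2loc_general d Ω K hKc hKΩ hKint hKunion
end

section
/- Let Ω be a nonempty open subset of ℝ^d and equip E = L²_loc(Ω) with the topology of L²-convergence on compact subsets. Then E is reflexive: the canonical evaluation map J : E → (E →L ℂ) →L ℂ, J(f)(Λ) = Λ(f), where each space of continuous linear maps carries the topology of uniform convergence on (von Neumann) bounded sets, is a linear bijection that is a homeomorphism onto the strong bidual. -/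
open MeasureTheory

/-!
`L²_loc(Ω)` is the projective limit of the Hilbert spaces `L²(K_j)` along the restriction maps
`R_j`, which are onto (extension by zero) and satisfy `‖R_j f‖ = p_j(f)`. Every continuous
functional on such a limit is dominated by a single `p_j`, hence factors through `L²(K_j)`. So an
element `Φ` of the strong bidual induces an element of each bidual `L²(K_j)''`, that is, by
Riesz, a point `g_j ∈ L²(K_j)`; by Hahn–Banach these points are compatible, and they glue to some
`f` with `J f = Φ`. The map `J` is continuous because a metrizable space is bornological, and
`J⁻¹` is continuous because `p_j(f)` is the supremum of `|J f|` over the image of the unit ball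
of `L²(K_j)'`, which is a strongly bounded set.
-/

open Bornology Filter Metric Topology

namespace StrongDual

variable (𝕜 E : Type*) [NontriviallyNormedField 𝕜] [AddCommGroup E] [Module 𝕜 E]
  [TopologicalSpace E] [ContinuousSMul 𝕜 E]

def toBidual : E →ₗ[𝕜] StrongDual 𝕜 (StrongDual 𝕜 E) where
  toFun f :=
    { toFun := fun Λ => Λ f
      map_add' := fun _ _ => rfl
      map_smul' := fun _ _ => rfl
      cont := continuous_eval_const f }
  map_add' f g := by ext Λ; exact map_add Λ f g
  map_smul' c f := by ext Λ; exact map_smul Λ c f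

variable {𝕜 E}

@[simp]
theorem toBidual_apply (f : E) (Λ : StrongDual 𝕜 E) : toBidual 𝕜 E f Λ = Λ f := rfl

theorem toBidual_injective [SeparatingDual 𝕜 E] : Function.Injective (toBidual 𝕜 E) :=
  fun _ _ h => SeparatingDual.eq_iff_forall_dual_eq.mpr fun Λ => congr($h Λ)

/-- A first countable space is bornological, so `toBidual` is continuous as soon as it maps
bounded sets to bounded sets; and a strongly bounded set of functionals is, by definition,
uniformly bounded on every bounded set. -/
theorem continuous_toBidual [IsTopologicalAddGroup E] [FirstCountableTopology E] :
    Continuous (toBidual 𝕜 E) := by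
  refine LinearMap.continuous_of_locally_bounded (F := StrongDual 𝕜 (StrongDual 𝕜 E))
    (toBidual 𝕜 E) fun s hs => ?_
  refine (ContinuousLinearMap.isVonNBounded_iff (R := 𝕜)).mpr fun S hS => ?_
  rw [Set.image2_image_left, Set.image2_swap]
  exact ContinuousLinearMap.isVonNBounded_image2_apply hS hs

end StrongDual

theorem InnerProductSpace.inclusionInDoubleDual_surjective (𝕜 H : Type*) [RCLike 𝕜]
    [NormedAddCommGroup H] [InnerProductSpace 𝕜 H] [CompleteSpace H] :
    Function.Surjective (NormedSpace.inclusionInDoubleDual 𝕜 H) := by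
  intro Φ
  let φ : StrongDual 𝕜 H := (starL 𝕜 : 𝕜 ≃L⋆[𝕜] 𝕜).toContinuousLinearMap.comp
    (Φ.comp (toDual 𝕜 H).toContinuousLinearEquiv.toContinuousLinearMap)
  refine ⟨(toDual 𝕜 H).symm φ, ContinuousLinearMap.ext fun ℓ => ?_⟩
  obtain ⟨y, rfl⟩ := (toDual 𝕜 H).surjective ℓ
  rw [NormedSpace.dual_def, toDual_apply_apply, ← inner_conj_symm, toDual_symm_apply]
  simp [φ]

theorem SeparatingDual.of_forall_map_eq_zero {𝕜 E ι : Type*} {H : ι → Type*} [Ring 𝕜]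
    [TopologicalSpace 𝕜] [AddCommGroup E] [Module 𝕜 E] [TopologicalSpace E]
    [∀ j, AddCommGroup (H j)] [∀ j, Module 𝕜 (H j)] [∀ j, TopologicalSpace (H j)]
    [∀ j, SeparatingDual 𝕜 (H j)] (R : ∀ j, E →L[𝕜] H j)
    (hR : ∀ f, (∀ j, R j f = 0) → f = 0) : SeparatingDual 𝕜 E := by
  refine ⟨fun f hf => ?_⟩
  by_contra! h
  exact hf (hR f fun j => eq_zero_of_forall_dual_eq_zero fun ℓ => h (ℓ.comp (R j)))

theorem LinearMap.exists_strongDual_factor_of_norm_le {𝕜 E H : Type*}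
    [NontriviallyNormedField 𝕜] [AddCommGroup E] [Module 𝕜 E] [NormedAddCommGroup H]
    [NormedSpace 𝕜 H] (R : E →ₗ[𝕜] H) (hR : Function.Surjective R) (Λ : E →ₗ[𝕜] 𝕜) (C : ℝ)
    (hΛ : ∀ f, ‖Λ f‖ ≤ C * ‖R f‖) : ∃ ℓ : StrongDual 𝕜 H, ∀ f, Λ f = ℓ (R f) := by
  obtain ⟨S, hS⟩ := R.exists_rightInverse_of_surjective (LinearMap.range_eq_top.mpr hR)
  have hRS (g : H) : R (S g) = g := LinearMap.congr_fun hS g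
  refine ⟨(Λ ∘ₗ S).mkContinuous C fun g => by simpa [hRS] using hΛ (S g), fun f => ?_⟩
  have h : Λ (f - S (R f)) = 0 := norm_le_zero_iff.mp (by simpa [hRS] using hΛ (f - S (R f)))
  simpa [sub_eq_zero] using h

namespace WithSeminorms

section NontriviallyNormedField

variable {𝕜 E : Type*} [NontriviallyNormedField 𝕜] [AddCommGroup E] [Module 𝕜 E]
  [TopologicalSpace E]

theorem continuous_of_norm_le {F ι : Type*} [NormedAddCommGroup F] [NormedSpace 𝕜 F]
    {q : SeminormFamily 𝕜 E ι} (hq : WithSeminorms q) (T : E →ₗ[𝕜] F) (i : ι)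
    (hT : ∀ f, ‖T f‖ ≤ q i f) : Continuous T :=
  hq.continuous_normedSpace_rng F T ⟨{i}, 1, fun f => by simpa using hT f⟩

theorem exists_strongDual_factor {p : SeminormFamily 𝕜 E ℕ} {H : ℕ → Type*}
    [∀ j, NormedAddCommGroup (H j)] [∀ j, NormedSpace 𝕜 (H j)] (hp : WithSeminorms p)
    (hmono : Monotone p) (R : ∀ j, E →ₗ[𝕜] H j) (hR : ∀ j f, ‖R j f‖ = p j f)
    (hsurj : ∀ j, Function.Surjective (R j)) (Λ : StrongDual 𝕜 E) :
    ∃ j, ∃ ℓ : StrongDual 𝕜 (H j), ∀ f, Λ f = ℓ (R j f) := by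
  obtain ⟨s, C, -, hC⟩ := Seminorm.bound_of_continuous hp
    ((normSeminorm 𝕜 𝕜).comp Λ.toLinearMap) (continuous_norm.comp Λ.continuous)
  have hsup : s.sup p ≤ p (s.sup id) :=
    Finset.sup_le fun i hi => hmono (Finset.le_sup (f := id) hi)
  refine ⟨s.sup id, (R _).exists_strongDual_factor_of_norm_le (hsurj _) Λ.toLinearMap C
    fun f => ?_⟩
  calc ‖Λ f‖ ≤ C * s.sup p f := hC f
    _ ≤ C * ‖R (s.sup id) f‖ := by rw [hR]; gcongr; exact hsup f

end NontriviallyNormedField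

variable {𝕜 E : Type*} [RCLike 𝕜] [AddCommGroup E] [Module 𝕜 E] [TopologicalSpace E]
  {p : SeminormFamily 𝕜 E ℕ} {H : ℕ → Type*} [∀ j, NormedAddCommGroup (H j)]
  [∀ j, NormedSpace 𝕜 (H j)]

theorem toBidual_surjective [ContinuousSMul 𝕜 E]
    (hp : WithSeminorms p) (hmono : Monotone p) (R : ∀ j, E →L[𝕜] H j)
    (hR : ∀ j f, ‖R j f‖ = p j f) (hsurj : ∀ j, Function.Surjective (R j))
    (hglue : ∀ g : ∀ j, H j, (∀ j, ∃ f, R j f = g j ∧ R (j + 1) f = g (j + 1)) →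
      ∃ f, ∀ j, R j f = g j)
    (hrefl : ∀ j, Function.Surjective (NormedSpace.inclusionInDoubleDual 𝕜 (H j))) :
    Function.Surjective (StrongDual.toBidual 𝕜 E) := by
  intro Φ
  have hrepr (j : ℕ) : ∃ g : H j, ∀ ℓ : StrongDual 𝕜 (H j), Φ (ℓ.comp (R j)) = ℓ g := by
    obtain ⟨g, hg⟩ := hrefl j (Φ.comp (ContinuousLinearMap.precomp 𝕜 (R j)))
    exact ⟨g, fun ℓ => congr($hg ℓ).symm⟩
  choose g hg using hrepr
  have hlift (j : ℕ) (ℓ : StrongDual 𝕜 (H j)) :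
      ∃ ℓ' : StrongDual 𝕜 (H (j + 1)), ∀ f, ℓ (R j f) = ℓ' (R (j + 1) f) := by
    refine (R (j + 1)).toLinearMap.exists_strongDual_factor_of_norm_le (hsurj _)
      (ℓ.comp (R j)).toLinearMap ‖ℓ‖ fun f => ?_
    calc ‖ℓ (R j f)‖ ≤ ‖ℓ‖ * ‖R j f‖ := ℓ.le_opNorm _
      _ ≤ ‖ℓ‖ * ‖R (j + 1) f‖ := by rw [hR, hR]; gcongr; exact hmono j.le_succ f
  have hcoh (j : ℕ) : ∃ f, R j f = g j ∧ R (j + 1) f = g (j + 1) := by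
    obtain ⟨f, hf⟩ := hsurj (j + 1) (g (j + 1))
    refine ⟨f, (SeparatingDual.eq_iff_forall_dual_eq (R := 𝕜)).mpr fun ℓ => ?_, hf⟩
    obtain ⟨ℓ', hℓ'⟩ := hlift j ℓ
    calc ℓ (R j f) = Φ (ℓ'.comp (R (j + 1))) := by rw [hℓ', hf, hg]
      _ = ℓ (g j) := by rw [← hg]; congr 1; ext f; exact (hℓ' f).symm
  obtain ⟨f, hf⟩ := hglue g hcoh
  refine ⟨f, ContinuousLinearMap.ext fun Λ => ?_⟩
  obtain ⟨j, ℓ, hΛ⟩ := hp.exists_strongDual_factor hmono (fun j => (R j).toLinearMap) hR hsurj Λ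
  have hΛ' : Λ = ℓ.comp (R j) := ContinuousLinearMap.ext hΛ
  simp only [StrongDual.toBidual_apply, hΛ, ContinuousLinearMap.coe_coe, hf, ← hg, ← hΛ']

theorem norm_le_of_mapsTo_toBidual {F : Type*} [NormedAddCommGroup F] [NormedSpace 𝕜 F]
    [ContinuousSMul 𝕜 E] (T : E →L[𝕜] F) {f : E} {r : ℝ}
    (h : Set.MapsTo (StrongDual.toBidual 𝕜 E f)
      (ContinuousLinearMap.precomp 𝕜 T '' closedBall 0 1) (closedBall 0 r)) : ‖T f‖ ≤ r := by
  obtain ⟨ℓ, hℓ1, hℓ⟩ := exists_dual_vector'' 𝕜 (T f)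
  simpa [hℓ] using h (Set.mem_image_of_mem _ (mem_closedBall_zero_iff.mpr hℓ1))

theorem exists_continuousLinearEquiv_toBidual (hp : WithSeminorms p) (hmono : Monotone p)
    (R : ∀ j, E →ₗ[𝕜] H j) (hR : ∀ j f, ‖R j f‖ = p j f)
    (hsurj : ∀ j, Function.Surjective (R j)) (hsep : ∀ f, (∀ j, R j f = 0) → f = 0)
    (hglue : ∀ g : ∀ j, H j, (∀ j, ∃ f, R j f = g j ∧ R (j + 1) f = g (j + 1)) →
      ∃ f, ∀ j, R j f = g j)
    (hrefl : ∀ j, Function.Surjective (NormedSpace.inclusionInDoubleDual 𝕜 (H j))) :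
    ∃ J : E ≃L[𝕜] StrongDual 𝕜 (StrongDual 𝕜 E), ∀ f Λ, J f Λ = Λ f := by
  have := hp.topologicalAddGroup
  have := hp.continuousSMul
  have := hp.firstCountableTopology
  let RL (j : ℕ) : E →L[𝕜] H j := ⟨R j, hp.continuous_of_norm_le (R j) j fun f => (hR j f).le⟩
  have := SeparatingDual.of_forall_map_eq_zero RL hsep
  let e := LinearEquiv.ofBijective (StrongDual.toBidual 𝕜 E)
    ⟨StrongDual.toBidual_injective, hp.toBidual_surjective hmono RL hR hsurj hglue hrefl⟩
  refine ⟨{ e with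
    continuous_toFun := StrongDual.continuous_toBidual
    continuous_invFun := ?_ }, fun _ _ => rfl⟩
  refine hp.continuous_of_continuous_comp (E := StrongDual 𝕜 (StrongDual 𝕜 E))
    e.symm.toLinearMap fun j => Seminorm.continuous' (r := 1) ?_
  have hB := (NormedSpace.isVonNBounded_closedBall 𝕜 (StrongDual 𝕜 (H j)) 1).image
    (ContinuousLinearMap.precomp 𝕜 (RL j))
  filter_upwards [ContinuousLinearMap.eventually_nhds_zero_mapsTo hB
    (closedBall_mem_nhds 0 one_pos)] with Φ hΦ
  rw [Seminorm.mem_closedBall_zero, Seminorm.comp_apply, ← hR]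
  have hΦ' : StrongDual.toBidual 𝕜 E (e.symm Φ) = Φ := e.apply_symm_apply Φ
  rw [← hΦ'] at hΦ
  exact norm_le_of_mapsTo_toBidual (RL j) hΦ

end WithSeminorms

theorem IsCompact.exists_subset_of_subset_interior_succ {X : Type*} [TopologicalSpace X]
    {K : ℕ → Set X} (hK : ∀ j, K j ⊆ interior (K (j + 1))) {s : Set X} (hs : IsCompact s)
    (hsK : s ⊆ ⋃ j, K j) : ∃ m, s ⊆ K m := by
  have hmono : Monotone fun j => interior (K (j + 1)) := monotone_nat_of_le_succ fun j =>
    interior_mono ((hK (j + 1)).trans interior_subset)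
  obtain ⟨m, hm⟩ := hs.elim_directed_cover _ (fun _ => isOpen_interior)
    (hsK.trans (Set.iUnion_mono hK)) hmono.directed_le
  exact ⟨m + 1, hm.trans interior_subset⟩

theorem MeasureTheory.exists_ae_eq_restrict_of_monotone {α β : Type*} [MeasurableSpace α]
    {μ : Measure α} {s : ℕ → Set α} (hs : ∀ j, MeasurableSet (s j)) (hmono : Monotone s)
    (g : ℕ → α → β) (hg : ∀ j, g (j + 1) =ᵐ[μ.restrict (s j)] g j) :
    ∃ F : α → β, ∀ j, F =ᵐ[μ.restrict (s j)] g j := by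
  classical
  have hae : ∀ᵐ x ∂μ, ∀ j, x ∈ s j → g (j + 1) x = g j x :=
    ae_all_iff.mpr fun j => (ae_restrict_iff' (hs j)).mp (hg j)
  refine ⟨fun x => if h : ∃ n, x ∈ s n then g (Nat.find h) x else g 0 x, fun m => ?_⟩
  rw [EventuallyEq, ae_restrict_iff' (hs m)]
  filter_upwards [hae] with x hx hxm
  have h : ∃ n, x ∈ s n := ⟨m, hxm⟩
  have hchain (k : ℕ) : g (Nat.find h + k) x = g (Nat.find h) x := by
    induction k with
    | zero => rfl
    | succ k ih =>
      rw [← add_assoc, hx _ (hmono (Nat.le_add_right _ k) (Nat.find_spec h)), ih]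
  obtain ⟨k, rfl⟩ := Nat.exists_eq_add_of_le (Nat.find_min' h hxm)
  rw [dif_pos h, hchain]

theorem L2locSeminorm_mono_s4 {d : ℕ} {Ω K K' : Set (Fin d → ℝ)} (hK : IsCompact K) (hKΩ : K ⊆ Ω)
    (hK' : IsCompact K') (hK'Ω : K' ⊆ Ω) (h : K ⊆ K') (f : L2loc d Ω) :
    L2locSeminorm d Ω K hK hKΩ f ≤ L2locSeminorm d Ω K' hK' hK'Ω f :=
  ENNReal.toReal_mono (f.2 K' hK' hK'Ω).ne
    (eLpNorm_mono_measure _ (Measure.restrict_mono h le_rfl))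

namespace L2loc

variable {d : ℕ} {Ω K : Set (Fin d → ℝ)}

theorem memLp_restrict (f : L2loc d Ω) (hK : IsCompact K) (hKΩ : K ⊆ Ω) :
    MemLp f.1 2 ((volume.restrict Ω).restrict K) :=
  ⟨f.1.aestronglyMeasurable.restrict, f.2 K hK hKΩ⟩

theorem mk_mem {F : (Fin d → ℝ) → ℂ} (hF : AEStronglyMeasurable F (volume.restrict Ω))
    (h : ∀ K, IsCompact K → K ⊆ Ω → eLpNorm F 2 ((volume.restrict Ω).restrict K) < ⊤) :
    AEEqFun.mk F hF ∈ L2loc d Ω := fun K hK hKΩ => by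
  rw [eLpNorm_congr_ae (AEEqFun.coeFn_mk F hF).restrict]
  exact h K hK hKΩ

noncomputable def restrictLp (hK : IsCompact K) (hKΩ : K ⊆ Ω) :
    L2loc d Ω →ₗ[ℂ] Lp ℂ 2 ((volume.restrict Ω).restrict K) where
  toFun f := (memLp_restrict f hK hKΩ).toLp
  map_add' f g := (MemLp.toLp_congr _
    ((memLp_restrict f hK hKΩ).add (memLp_restrict g hK hKΩ))
    (AEEqFun.coeFn_add f.1 g.1).restrict).trans (MemLp.toLp_add _ _)
  map_smul' c f := (MemLp.toLp_congr _ ((memLp_restrict f hK hKΩ).const_smul c)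
    (AEEqFun.coeFn_smul c f.1).restrict).trans (MemLp.toLp_const_smul _ _)

theorem coeFn_restrictLp (hK : IsCompact K) (hKΩ : K ⊆ Ω) (f : L2loc d Ω) :
    restrictLp hK hKΩ f =ᵐ[(volume.restrict Ω).restrict K] f.1 :=
  MemLp.coeFn_toLp (memLp_restrict f hK hKΩ)

theorem restrictLp_eq_of_ae_eq (hK : IsCompact K) (hKΩ : K ⊆ Ω) {f : L2loc d Ω}
    {g : Lp ℂ 2 ((volume.restrict Ω).restrict K)}
    (h : f.1 =ᵐ[(volume.restrict Ω).restrict K] g) : restrictLp hK hKΩ f = g :=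
  Lp.ext ((coeFn_restrictLp hK hKΩ f).trans h)

theorem norm_restrictLp (hK : IsCompact K) (hKΩ : K ⊆ Ω) (f : L2loc d Ω) :
    ‖restrictLp hK hKΩ f‖ = L2locSeminorm d Ω K hK hKΩ f :=
  Lp.norm_toLp _ (memLp_restrict f hK hKΩ)

theorem restrictLp_surjective (hK : IsCompact K) (hKΩ : K ⊆ Ω) :
    Function.Surjective (restrictLp hK hKΩ) := by
  intro g
  have hKm := hK.isClosed.measurableSet
  have hmeas : AEStronglyMeasurable (K.indicator g) (volume.restrict Ω) :=
    ((Lp.stronglyMeasurable g).indicator hKm).aestronglyMeasurable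
  have hmem : AEEqFun.mk (K.indicator g) hmeas ∈ L2loc d Ω := mk_mem hmeas fun K' _ _ =>
    calc eLpNorm (K.indicator g) 2 ((volume.restrict Ω).restrict K')
        ≤ eLpNorm (K.indicator g) 2 (volume.restrict Ω) :=
          eLpNorm_mono_measure _ Measure.restrict_le_self
      _ = eLpNorm g 2 ((volume.restrict Ω).restrict K) :=
          eLpNorm_indicator_eq_eLpNorm_restrict hKm
      _ < ⊤ := Lp.eLpNorm_lt_top g
  exact ⟨⟨_, hmem⟩, restrictLp_eq_of_ae_eq hK hKΩ
    ((AEEqFun.coeFn_mk _ _).restrict.trans (indicator_ae_eq_restrict hKm))⟩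

variable {K : ℕ → Set (Fin d → ℝ)} (hKc : ∀ j, IsCompact (K j)) (hKΩ : ∀ j, K j ⊆ Ω)

theorem eq_zero_of_forall_restrictLp_eq_zero (hKunion : ⋃ j, K j = Ω) (f : L2loc d Ω)
    (h : ∀ j, restrictLp (hKc j) (hKΩ j) f = 0) : f = 0 := by
  have hK (j : ℕ) : f.1 =ᵐ[(volume.restrict Ω).restrict (K j)] 0 :=
    (coeFn_restrictLp (hKc j) (hKΩ j) f).symm.trans (h j ▸ Lp.coeFn_zero _ _ _)
  have hΩ : f.1 =ᵐ[(volume.restrict Ω).restrict (⋃ j, K j)] 0 :=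
    (ae_restrict_iUnion_iff _ _).mpr hK
  rw [hKunion, Measure.restrict_restrict_of_subset subset_rfl] at hΩ
  exact Subtype.ext (AEEqFun.ext (hΩ.trans AEEqFun.coeFn_zero.symm))

theorem exists_forall_restrictLp_eq (hKint : ∀ j, K j ⊆ interior (K (j + 1)))
    (hKunion : ⋃ j, K j = Ω) (g : ∀ j, Lp ℂ 2 ((volume.restrict Ω).restrict (K j)))
    (hg : ∀ j, ∃ f, restrictLp (hKc j) (hKΩ j) f = g j ∧
      restrictLp (hKc (j + 1)) (hKΩ (j + 1)) f = g (j + 1)) :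
    ∃ f, ∀ j, restrictLp (hKc j) (hKΩ j) f = g j := by
  have hKmono : Monotone K := monotone_nat_of_le_succ fun j => (hKint j).trans interior_subset
  have hcompat (j : ℕ) : g (j + 1) =ᵐ[(volume.restrict Ω).restrict (K j)] g j := by
    obtain ⟨f, hfj, hfj1⟩ := hg j
    rw [← hfj, ← hfj1]
    exact ((coeFn_restrictLp _ _ f).filter_mono
      (ae_mono (Measure.restrict_mono (hKmono j.le_succ) le_rfl))).trans
      (coeFn_restrictLp _ _ f).symm
  obtain ⟨F, hF⟩ := exists_ae_eq_restrict_of_monotone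
    (fun j => (hKc j).isClosed.measurableSet) hKmono (fun j => g j) hcompat
  have hmeas : AEStronglyMeasurable F ((volume.restrict Ω).restrict (⋃ j, K j)) :=
    aestronglyMeasurable_iUnion_iff.mpr fun j =>
      (Lp.aestronglyMeasurable (g j)).congr (hF j).symm
  rw [hKunion, Measure.restrict_restrict_of_subset subset_rfl] at hmeas
  have hmem : AEEqFun.mk F hmeas ∈ L2loc d Ω := mk_mem hmeas fun K' hK' hK'Ω => by
    obtain ⟨m, hm⟩ := hK'.exists_subset_of_subset_interior_succ hKint (hKunion ▸ hK'Ω)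
    calc eLpNorm F 2 ((volume.restrict Ω).restrict K')
        ≤ eLpNorm F 2 ((volume.restrict Ω).restrict (K m)) :=
          eLpNorm_mono_measure _ (Measure.restrict_mono hm le_rfl)
      _ = eLpNorm (g m) 2 ((volume.restrict Ω).restrict (K m)) := eLpNorm_congr_ae (hF m)
      _ < ⊤ := Lp.eLpNorm_lt_top _
  exact ⟨⟨_, hmem⟩, fun j => restrictLp_eq_of_ae_eq _ _
    ((AEEqFun.coeFn_mk _ _).restrict.trans (hF j))⟩

end L2loc

set_option maxSynthPendingDepth 3

theorem L2loc_reflexive_general (d : ℕ) (Ω : Set (Fin d → ℝ))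
    (K : ℕ → Set (Fin d → ℝ)) (hKc : ∀ j, IsCompact (K j)) (hKΩ : ∀ j, K j ⊆ Ω)
    (hKint : ∀ j, K j ⊆ interior (K (j + 1))) (hKunion : (⋃ j, K j) = Ω) :
    letI : TopologicalSpace (L2loc d Ω) := L2locTopology d Ω K hKc hKΩ
    ∃ J : L2loc d Ω ≃L[ℂ] ((L2loc d Ω →L[ℂ] ℂ) →L[ℂ] ℂ),
      ∀ (f : L2loc d Ω) (Λ : L2loc d Ω →L[ℂ] ℂ), J f Λ = Λ f := by
  let _ : TopologicalSpace (L2loc d Ω) := L2locTopology d Ω K hKc hKΩ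
  have hKmono : Monotone K := monotone_nat_of_le_succ fun j => (hKint j).trans interior_subset
  exact WithSeminorms.exists_continuousLinearEquiv_toBidual
    (p := L2locSeminormFamily d Ω K hKc hKΩ) ⟨rfl⟩
    (fun i j hij => L2locSeminorm_mono_s4 _ _ _ _ (hKmono hij))
    (fun j => L2loc.restrictLp (hKc j) (hKΩ j)) (fun j => L2loc.norm_restrictLp _ _)
    (fun j => L2loc.restrictLp_surjective _ _)
    (L2loc.eq_zero_of_forall_restrictLp_eq_zero hKc hKΩ hKunion)
    (L2loc.exists_forall_restrictLp_eq hKc hKΩ hKint hKunion)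
    (fun j => InnerProductSpace.inclusionInDoubleDual_surjective ℂ _)

/-- **`L²_loc(Ω)` is reflexive** (the paper's Lemma 2.10, scalar case): for a nonempty open
`Ω ⊆ ℝ^d`, the Fréchet space `E = L²_loc(Ω)` with the topology of `L²`-convergence on
compact subsets is reflexive: the canonical evaluation map `J : E → E''`, `J(f)(Λ) = Λ(f)`,
into the strong bidual (each dual carrying the topology of uniform convergence on von
Neumann bounded sets, which is the default topology on `→L` in Mathlib) is a linear
bijection and a homeomorphism onto the strong bidual. -/
theorem L2loc_reflexive (d : ℕ) (Ω : Set (Fin d → ℝ)) (hΩ : IsOpen Ω) (hne : Ω.Nonempty)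
    (K : ℕ → Set (Fin d → ℝ)) (hKc : ∀ j, IsCompact (K j)) (hKΩ : ∀ j, K j ⊆ Ω)
    (hKint : ∀ j, K j ⊆ interior (K (j + 1))) (hKunion : (⋃ j, K j) = Ω) :
    letI : TopologicalSpace (L2loc d Ω) := L2locTopology d Ω K hKc hKΩ
    ∃ J : L2loc d Ω ≃L[ℂ] ((L2loc d Ω →L[ℂ] ℂ) →L[ℂ] ℂ),
      ∀ (f : L2loc d Ω) (Λ : L2loc d Ω →L[ℂ] ℂ), J f Λ = Λ f :=
  L2loc_reflexive_general d Ω K hKc hKΩ hKint hKunion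
end
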